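/- Let α, γ, μ > 0 with α = μγ, and let β, δ ∈ (0,1) with 2β < 1. Then for all t > 0, e^(αt) t^β ∫₀ᵗ (t-s)^(-δ) e^(-μγ(t-s)) e^(-2αs) s^(-2β) ds ≤ B(1-2β, 1-δ) · t^(1-δ-β), where B is the Beta function. -/

import Mathlib

open MeasureTheory Real

/-- The Beta function B(a,b) = ∫₀¹ τ^(a-1) (1-τ)^(b-1) dτ. -/
noncomputable def betaFn (a b : ℝ) : ℝ := ∫ τ in (0:ℝ)..1, τ ^ (a - 1) * (1 - τ) ^ (b - 1)

/-! Dropping the damping factor `e^{-αs}` leaves `∫₀ᵗ (t-s)^{-δ} s^{-2β} ds`, since the weights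
`e^{αt} e^{-α(t-s)} e^{-2αs}` multiply to `e^{-αs} ≤ 1`; the substitution `s = tτ` turns this
integral into `t^{1-δ-2β} B(1-2β, 1-δ)`. -/

namespace Real

/-- Away from its right endpoint the Beta kernel is `s^(a-1)` times a continuous function. -/
lemma intervalIntegrable_rpow_mul_rpow_sub_of_lt {a b t u : ℝ} (ha : 0 < a) (ht : 0 < t)
    (hu : u < t) :
    IntervalIntegrable (fun s => s ^ (a - 1) * (t - s) ^ (b - 1)) volume 0 u := by
  refine (intervalIntegral.intervalIntegrable_rpow' (by linarith)).mul_continuousOn ?_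
  refine (continuousOn_const.sub continuousOn_id).rpow_const fun s hs => Or.inl ?_
  have : s ≤ max 0 u := (Set.mem_uIcc.mp hs).elim (fun h => h.2.trans (le_max_right _ _))
    (fun h => h.2.trans (le_max_left _ _))
  exact (sub_pos.mpr (this.trans_lt (max_lt ht hu))).ne'

lemma intervalIntegrable_rpow_mul_rpow_sub {a b t : ℝ} (ha : 0 < a) (hb : 0 < b) (ht : 0 < t) :
    IntervalIntegrable (fun s => s ^ (a - 1) * (t - s) ^ (b - 1)) volume 0 t := by
  have hleft := intervalIntegrable_rpow_mul_rpow_sub_of_lt (b := b) ha ht (half_lt_self ht)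
  have hright : IntervalIntegrable (fun s => s ^ (a - 1) * (t - s) ^ (b - 1)) volume (t / 2) t := by
    have := (intervalIntegrable_rpow_mul_rpow_sub_of_lt (b := a) hb ht
      (half_lt_self ht)).comp_sub_left t
    rw [sub_zero, sub_half] at this
    simpa only [sub_sub_cancel, mul_comm] using this.symm
  exact hleft.trans hright

lemma integral_rpow_mul_rpow_sub (a b : ℝ) {t : ℝ} (ht : 0 < t) :
    ∫ s in (0:ℝ)..t, s ^ (a - 1) * (t - s) ^ (b - 1) = t ^ (a + b - 1) * betaFn a b := by
  have hscale := intervalIntegral.smul_integral_comp_mul_left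
    (fun s => s ^ (a - 1) * (t - s) ^ (b - 1)) t (a := 0) (b := 1)
  rw [mul_zero, mul_one] at hscale
  have hkernel : ∀ τ ∈ Set.uIcc (0:ℝ) 1, (t * τ) ^ (a - 1) * (t - t * τ) ^ (b - 1)
      = t ^ (a + b - 2) * (τ ^ (a - 1) * (1 - τ) ^ (b - 1)) := by
    intro τ hτ
    rw [Set.uIcc_of_le zero_le_one] at hτ
    rw [show t - t * τ = t * (1 - τ) by ring, mul_rpow ht.le hτ.1,
      mul_rpow ht.le (sub_nonneg.mpr hτ.2), show a + b - 2 = (a - 1) + (b - 1) by ring,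
      rpow_add ht]
    ring
  rw [← hscale, intervalIntegral.integral_congr hkernel, intervalIntegral.integral_const_mul,
    smul_eq_mul, ← mul_assoc, betaFn]
  congr 1
  rw [mul_comm, ← rpow_add_one ht.ne']
  ring_nf

end Real

lemma intervalIntegral_mul_exp_neg_le {f : ℝ → ℝ} {c t : ℝ} (hc : 0 ≤ c) (ht : 0 ≤ t)
    (hf : IntervalIntegrable f volume 0 t) (hf0 : ∀ s ∈ Set.Icc 0 t, 0 ≤ f s) :
    ∫ s in (0:ℝ)..t, f s * exp (-(c * s)) ≤ ∫ s in (0:ℝ)..t, f s := by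
  refine intervalIntegral.integral_mono_on ht (hf.mul_continuousOn (by fun_prop)) hf
    fun s hs => ?_
  have hexp : exp (-(c * s)) ≤ 1 := exp_le_one_iff.mpr (neg_nonpos.mpr (mul_nonneg hc hs.1))
  exact mul_le_of_le_one_right (hf0 s hs) hexp

theorem scaling_integral_bound_general (α γ μ β δ : ℝ) (hα : 0 < α)
    (hαγ : α = μ * γ) (hβ : 2 * β < 1) (hδ1 : δ < 1) :
    ∀ t > (0:ℝ),
      Real.exp (α * t) * t ^ β *
          (∫ s in (0:ℝ)..t, (t - s) ^ (-δ) * Real.exp (-(μ * γ) * (t - s)) *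
            Real.exp (-(2 * α) * s) * s ^ (-(2 * β))) ≤
        betaFn (1 - 2 * β) (1 - δ) * t ^ (1 - δ - β) := by
  intro t ht
  set kernel : ℝ → ℝ := fun s => s ^ ((1 - 2 * β) - 1) * (t - s) ^ ((1 - δ) - 1)
  have hweights : exp (α * t) * (∫ s in (0:ℝ)..t, (t - s) ^ (-δ) * exp (-(μ * γ) * (t - s)) *
      exp (-(2 * α) * s) * s ^ (-(2 * β))) = ∫ s in (0:ℝ)..t, kernel s * exp (-(α * s)) := by
    rw [← intervalIntegral.integral_const_mul, ← hαγ]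
    congr 1 with s
    have hexp : exp (α * t) * exp (-α * (t - s)) * exp (-(2 * α) * s) = exp (-(α * s)) := by
      rw [← exp_add, ← exp_add]; ring_nf
    simp only [kernel, sub_sub_cancel_left, ← hexp]
    ring
  have hkernel_nonneg : ∀ s ∈ Set.Icc 0 t, 0 ≤ kernel s := fun s hs =>
    mul_nonneg (rpow_nonneg hs.1 _) (rpow_nonneg (sub_nonneg.mpr hs.2) _)
  have hkernel_int : IntervalIntegrable kernel volume 0 t :=
    intervalIntegrable_rpow_mul_rpow_sub (by linarith) (by linarith) ht
  calc exp (α * t) * t ^ β * (∫ s in (0:ℝ)..t, (t - s) ^ (-δ) * exp (-(μ * γ) * (t - s)) *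
          exp (-(2 * α) * s) * s ^ (-(2 * β)))
      = t ^ β * ∫ s in (0:ℝ)..t, kernel s * exp (-(α * s)) := by rw [← hweights]; ring
    _ ≤ t ^ β * ∫ s in (0:ℝ)..t, kernel s := by
      gcongr
      exact intervalIntegral_mul_exp_neg_le hα.le ht.le hkernel_int hkernel_nonneg
    _ = betaFn (1 - 2 * β) (1 - δ) * t ^ (1 - δ - β) := by
      rw [integral_rpow_mul_rpow_sub _ _ ht, ← mul_assoc, ← rpow_add ht]
      ring_nf

theorem scaling_integral_bound (α γ μ β δ : ℝ) (hα : 0 < α) (hγ : 0 < γ) (hμ : 0 < μ)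
    (hαγ : α = μ * γ) (hβ0 : 0 < β) (hβ : 2 * β < 1) (hδ0 : 0 < δ) (hδ1 : δ < 1) :
    ∀ t > (0:ℝ),
      Real.exp (α * t) * t ^ β *
          (∫ s in (0:ℝ)..t, (t - s) ^ (-δ) * Real.exp (-(μ * γ) * (t - s)) *
            Real.exp (-(2 * α) * s) * s ^ (-(2 * β))) ≤
        betaFn (1 - 2 * β) (1 - δ) * t ^ (1 - δ - β) :=
  scaling_integral_bound_general α γ μ β δ hα hαγ hβ hδ1
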